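/- Let n ≥ 1, let c_1,…,c_n be distinct complex numbers, let r_0,…,r_n ∈ ℂ, set q_0(λ) = ∏_{j=1}^n (λ−c_j) and q_1(λ) = q_0(λ) ∑_{j=1}^n r_j/(λ−c_j). Define p_k(λ) = C(n+r_0−2, k) q_0^{(k)}(λ) + C(n+r_0−2, k−1) q_1^{(k−1)}(λ) for 1 ≤ k ≤ n (with C(·,−1)=0 and p_0 = q_0 · C(n+r_0−2,0)). Then for all complex x, λ with x ≠ c_j and x ≠ λ: ∑_{k=0}^n (r_0)_{n−k} [C(n+r_0−2,k) q_0^{(k)}(λ) + C(n+r_0−2,k−1) q_1^{(k−1)}(λ)] (x−λ)^k = (r_0)_{n−1} [ (n+r_0−1)/(x−λ) − ∑_{j=1}^n (1−r_j)/(x−c_j) ] · (x−λ)(x−c_1)⋯(x−c_n). -/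

import Mathlib

open Polynomial Finset

/-- Pochhammer symbol `(α)_m = α(α+1)⋯(α+m−1)` on `ℂ`. -/
noncomputable def poch (α : ℂ) (m : ℕ) : ℂ := (ascPochhammer ℂ m).eval α

/-- Generalized binomial coefficient `C(α,k) = α(α−1)⋯(α−k+1)/k!` on `ℂ`. -/
noncomputable def binomC (α : ℂ) (k : ℕ) : ℂ := (descPochhammer ℂ k).eval α / (k.factorial : ℂ)

/-- `q_0(λ) = ∏_{j=1}^n (λ − c_j)` as a polynomial. -/
noncomputable def q0 (n : ℕ) (c : Fin n → ℂ) : Polynomial ℂ := ∏ j, (X - C (c j))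

/-- `q_1(λ) = q_0(λ) ∑_{j=1}^n r_j/(λ − c_j) = ∑_j r_j ∏_{i≠j}(λ − c_i)` as a polynomial. -/
noncomputable def q1 (n : ℕ) (c : Fin n → ℂ) (r : Fin n → ℂ) : Polynomial ℂ :=
  ∑ j, r j • ∏ i ∈ Finset.univ.erase j, (X - C (c i))

lemma taylor_expand (p : Polynomial ℂ) (d : ℕ) (hp : p.natDegree < d + 1) (lam x : ℂ) :
    p.eval x = ∑ k ∈ Finset.range (d+1),
      (Polynomial.derivative^[k] p).eval lam / (k.factorial : ℂ) * (x - lam) ^ k := by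
  conv_lhs => rw [← Polynomial.sum_taylor_eq p lam]
  rw [Polynomial.sum_over_range' _ (fun n => by simp) (d+1)
    (by rwa [Polynomial.natDegree_taylor])]
  rw [Polynomial.eval_finset_sum]
  refine Finset.sum_congr rfl fun k _ => ?_
  have h1 : (Polynomial.taylor lam p).coeff k = (Polynomial.hasseDeriv k p).eval lam :=
    Polynomial.taylor_coeff lam p k
  have h2 : ((k.factorial : ℂ[X])) * (Polynomial.hasseDeriv k p) = Polynomial.derivative^[k] p := by
    have := congrFun (Polynomial.factorial_smul_hasseDeriv (R := ℂ) k) p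
    simpa using this
  have hk : (k.factorial : ℂ) ≠ 0 := Nat.cast_ne_zero.mpr k.factorial_ne_zero
  have h3 : (Polynomial.hasseDeriv k p).eval lam
      = (Polynomial.derivative^[k] p).eval lam / (k.factorial : ℂ) := by
    rw [← h2, Polynomial.eval_mul]
    simp
    field_simp
  simp [h1, h3]

lemma deriv_linprod {ι : Type*} [DecidableEq ι] (s : Finset ι) (c : ι → ℂ) :
    Polynomial.derivative (∏ j ∈ s, (X - C (c j))) =
      ∑ j ∈ s, ∏ i ∈ s.erase j, (X - C (c i)) := by
  induction s using Finset.induction_on with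
  | empty => simp
  | @insert a s ha ih =>
    rw [Finset.prod_insert ha, Polynomial.derivative_mul, ih, Finset.sum_insert ha]
    simp only [Polynomial.derivative_sub, Polynomial.derivative_X, Polynomial.derivative_C,
      sub_zero, one_mul]
    rw [Finset.erase_insert ha]
    rw [Finset.mul_sum]
    congr 1
    refine Finset.sum_congr rfl fun j hj => ?_
    have hne : a ≠ j := fun h => ha (h ▸ hj)
    rw [Finset.erase_insert_of_ne hne, Finset.prod_insert
      (fun h => ha (Finset.mem_erase.mp h).2)]

lemma poch_fact2 (n k : ℕ) (hk1 : 1 ≤ k) (hkn : k ≤ n) (r0 : ℂ) :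
    poch r0 (n-k) * (descPochhammer ℂ (k-1)).eval ((n:ℂ)+r0-2) = poch r0 (n-1) := by
  have hnk : ((n - k : ℕ) : ℂ) = (n : ℂ) - k := by
    push_cast [Nat.cast_sub hkn]; ring
  have hk1' : ((k - 1 : ℕ) : ℂ) = (k : ℂ) - 1 := by
    push_cast [Nat.cast_sub hk1]; ring
  have harg : (n:ℂ)+r0-2 - ((k-1:ℕ):ℂ) + 1 = r0 + ((n-k:ℕ):ℂ) := by rw [hk1', hnk]; ring
  have hmul := ascPochhammer_mul (S := ℂ) (n-k) (k-1)
  have hsum : (n-k) + (k-1) = n - 1 := by omega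
  rw [hsum] at hmul
  have h := congrArg (Polynomial.eval r0) hmul
  simp only [Polynomial.eval_mul, Polynomial.eval_comp, Polynomial.eval_add, Polynomial.eval_X,
    Polynomial.eval_natCast] at h
  rw [descPochhammer_eval_eq_ascPochhammer, harg]
  unfold poch
  rw [← h]

lemma poch_fact1 (n k : ℕ) (hn : 1 ≤ n) (hkn : k ≤ n) (r0 : ℂ) :
    poch r0 (n-k) * (descPochhammer ℂ k).eval ((n:ℂ)+r0-2) =
      poch r0 (n-1) * ((n:ℂ) + r0 - 1 - k) := by
  rcases Nat.eq_zero_or_pos k with hk | hk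
  · subst hk
    simp only [Nat.sub_zero, descPochhammer_zero, Polynomial.eval_one, mul_one, Nat.cast_zero,
      sub_zero]
    have h : n = (n - 1) + 1 := by omega
    rw [h]
    unfold poch
    rw [ascPochhammer_succ_eval]
    have : ((n - 1 : ℕ) : ℂ) = (n : ℂ) - 1 := by push_cast [Nat.cast_sub hn]; ring
    rw [this, h]
    push_cast
    ring
  · have h : k = (k - 1) + 1 := by omega
    rw [h, descPochhammer_succ_eval, ← mul_assoc, ← h, poch_fact2 n k hk hkn r0]
    have : ((k - 1 : ℕ) : ℂ) = (k : ℂ) - 1 := by push_cast [Nat.cast_sub hk]; ring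
    rw [this]
    ring

/-- The key polynomial identity in the proof of the potential lemma (Lemma 4.1):
`∑_{k=0}^n (r_0)_{n−k} [C(n+r_0−2,k) q_0^{(k)}(λ) + C(n+r_0−2,k−1) q_1^{(k−1)}(λ)] (x−λ)^k
 = (r_0)_{n−1}[(n+r_0−1)/(x−λ) − ∑_j (1−r_j)/(x−c_j)](x−λ)(x−c_1)⋯(x−c_n)`,
with the convention `C(·,−1) = 0`. -/
theorem jordan_pochhammer_key_identity (n : ℕ) (hn : 1 ≤ n) (c : Fin n → ℂ)
    (hc : Function.Injective c) (r0 : ℂ) (r : Fin n → ℂ) (x lam : ℂ)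
    (hx : ∀ j, x ≠ c j) (hxl : x ≠ lam) :
    ∑ k ∈ Finset.range (n + 1), poch r0 (n - k) *
        (binomC ((n : ℂ) + r0 - 2) k * (Polynomial.derivative^[k] (q0 n c)).eval lam +
          (if k = 0 then 0 else
            binomC ((n : ℂ) + r0 - 2) (k - 1) *
              (Polynomial.derivative^[k - 1] (q1 n c r)).eval lam)) * (x - lam) ^ k =
      poch r0 (n - 1) *
        (((n : ℂ) + r0 - 1) / (x - lam) - ∑ j, (1 - r j) / (x - c j)) *
        ((x - lam) * ∏ j, (x - c j)) := by
  classical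
  set t := x - lam with htdef
  have ht : t ≠ 0 := sub_ne_zero.mpr hxl
  have hxc : ∀ j, x - c j ≠ 0 := fun j => sub_ne_zero.mpr (hx j)
  have hq0deg : (q0 n c).natDegree ≤ n := by
    unfold q0
    refine le_trans (Polynomial.natDegree_prod_le _ _) ?_
    simp [Polynomial.natDegree_X_sub_C]
  have hq1deg : (q1 n c r).natDegree ≤ n - 1 := by
    unfold q1
    refine Polynomial.natDegree_sum_le_of_forall_le _ _ fun j _ => ?_
    refine le_trans (Polynomial.natDegree_smul_le _ _) ?_
    refine le_trans (Polynomial.natDegree_prod_le _ _) ?_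
    simp [Polynomial.natDegree_X_sub_C, Finset.card_erase_of_mem]
  have hq0'deg : (Polynomial.derivative (q0 n c)).natDegree ≤ n - 1 :=
    le_trans (Polynomial.natDegree_derivative_le _) (Nat.sub_le_sub_right hq0deg 1)
  have hn1 : n - 1 + 1 = n := by omega
  have T0 : (q0 n c).eval x = ∑ k ∈ Finset.range (n+1),
      (Polynomial.derivative^[k] (q0 n c)).eval lam / (k.factorial : ℂ) * t ^ k :=
    taylor_expand _ n (Nat.lt_succ_of_le hq0deg) lam x
  have T0' : (Polynomial.derivative (q0 n c)).eval x = ∑ k ∈ Finset.range n,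
      (Polynomial.derivative^[k] (Polynomial.derivative (q0 n c))).eval lam
        / (k.factorial : ℂ) * t ^ k := by
    have := taylor_expand (Polynomial.derivative (q0 n c)) (n-1)
      (Nat.lt_succ_of_le hq0'deg) lam x
    rwa [hn1] at this
  have T1 : (q1 n c r).eval x = ∑ k ∈ Finset.range n,
      (Polynomial.derivative^[k] (q1 n c r)).eval lam / (k.factorial : ℂ) * t ^ k := by
    have := taylor_expand (q1 n c r) (n-1) (Nat.lt_succ_of_le hq1deg) lam x
    rwa [hn1] at this
  have sum2 : ∑ k ∈ Finset.range (n+1),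
      (k : ℂ) * ((Polynomial.derivative^[k] (q0 n c)).eval lam / (k.factorial : ℂ) * t ^ k)
      = t * (Polynomial.derivative (q0 n c)).eval x := by
    rw [Finset.sum_range_succ']
    simp only [Nat.cast_zero, zero_mul, add_zero]
    rw [T0', Finset.mul_sum]
    refine Finset.sum_congr rfl fun i _ => ?_
    rw [Function.iterate_succ_apply]
    have hfac : ((i+1).factorial : ℂ) = ((i:ℂ)+1) * (i.factorial : ℂ) := by
      push_cast [Nat.factorial_succ]; ring
    have hif : (i.factorial : ℂ) ≠ 0 := Nat.cast_ne_zero.mpr i.factorial_ne_zero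
    have hi1 : ((i:ℂ)+1) ≠ 0 := by
      have : ((i+1:ℕ):ℂ) ≠ 0 := Nat.cast_ne_zero.mpr (Nat.succ_ne_zero i)
      push_cast at this; exact this
    rw [hfac, pow_succ]
    push_cast
    field_simp
  have sum3 : ∑ k ∈ Finset.range (n+1),
      (if k = 0 then (0:ℂ) else
        (Polynomial.derivative^[k-1] (q1 n c r)).eval lam / ((k-1).factorial : ℂ) * t ^ k)
      = t * (q1 n c r).eval x := by
    rw [Finset.sum_range_succ']
    have hterm : ∀ i ∈ Finset.range n,
        (if i+1 = 0 then (0:ℂ) else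
          (Polynomial.derivative^[i+1-1] (q1 n c r)).eval lam / ((i+1-1).factorial : ℂ) * t ^ (i+1))
        = t * ((Polynomial.derivative^[i] (q1 n c r)).eval lam / (i.factorial : ℂ) * t ^ i) := by
      intro i _
      rw [if_neg (Nat.succ_ne_zero i), Nat.add_sub_cancel, pow_succ]
      ring
    rw [Finset.sum_congr rfl hterm, ← Finset.mul_sum, ← T1, if_pos rfl, add_zero]
  have step : ∀ k ∈ Finset.range (n+1),
      poch r0 (n - k) *
        (binomC ((n : ℂ) + r0 - 2) k * (Polynomial.derivative^[k] (q0 n c)).eval lam +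
          (if k = 0 then 0 else
            binomC ((n : ℂ) + r0 - 2) (k - 1) *
              (Polynomial.derivative^[k - 1] (q1 n c r)).eval lam)) * t ^ k
      = poch r0 (n-1) * (((n:ℂ)+r0-1) *
            ((Polynomial.derivative^[k] (q0 n c)).eval lam / (k.factorial:ℂ) * t^k))
        - poch r0 (n-1) * ((k:ℂ) *
            ((Polynomial.derivative^[k] (q0 n c)).eval lam / (k.factorial:ℂ) * t^k))
        + poch r0 (n-1) * (if k = 0 then (0:ℂ) else
            (Polynomial.derivative^[k-1] (q1 n c r)).eval lam / ((k-1).factorial:ℂ) * t^k) := by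
    intro k hk
    have hkn : k ≤ n := Nat.lt_succ_iff.mp (Finset.mem_range.mp hk)
    have hf1 : poch r0 (n-k) * binomC ((n:ℂ)+r0-2) k
        = poch r0 (n-1) * ((n:ℂ)+r0-1-k) / (k.factorial:ℂ) := by
      unfold binomC
      rw [← mul_div_assoc, poch_fact1 n k hn hkn r0]
    rcases eq_or_ne k 0 with h0 | h0
    · subst h0
      have hb : binomC ((n:ℂ)+r0-2) 0 = 1 := by unfold binomC; simp
      have h1 : poch r0 n = poch r0 (n-1) * ((n:ℂ)+r0-1) := by
        have := poch_fact1 n 0 hn (Nat.zero_le n) r0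
        simpa using this
      simp only [hb, h1, Nat.sub_zero]
      norm_num
      ring
    · have hk1 : 1 ≤ k := Nat.one_le_iff_ne_zero.mpr h0
      have hf2 : poch r0 (n-k) * binomC ((n:ℂ)+r0-2) (k-1)
          = poch r0 (n-1) / ((k-1).factorial:ℂ) := by
        unfold binomC
        rw [← mul_div_assoc, poch_fact2 n k hk1 hkn r0]
      simp only [if_neg h0]
      have expand : poch r0 (n-k) *
          (binomC ((n:ℂ)+r0-2) k * (Polynomial.derivative^[k] (q0 n c)).eval lam +
            binomC ((n:ℂ)+r0-2) (k-1) * (Polynomial.derivative^[k-1] (q1 n c r)).eval lam) * t^k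
          = (poch r0 (n-k) * binomC ((n:ℂ)+r0-2) k) *
              (Polynomial.derivative^[k] (q0 n c)).eval lam * t^k
            + (poch r0 (n-k) * binomC ((n:ℂ)+r0-2) (k-1)) *
              (Polynomial.derivative^[k-1] (q1 n c r)).eval lam * t^k := by ring
      rw [expand, hf1, hf2]
      ring
  rw [Finset.sum_congr rfl step, Finset.sum_add_distrib, Finset.sum_sub_distrib,
    ← Finset.mul_sum, ← Finset.mul_sum, ← Finset.mul_sum, ← Finset.mul_sum, sum2, sum3, ← T0]
  have hq0x : (q0 n c).eval x = ∏ j, (x - c j) := by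
    simp [q0, Polynomial.eval_prod]
  have hq1x : (q1 n c r).eval x = ∑ j, r j * ∏ i ∈ Finset.univ.erase j, (x - c i) := by
    unfold q1
    rw [Polynomial.eval_finset_sum]
    refine Finset.sum_congr rfl fun j _ => ?_
    rw [Polynomial.eval_smul, Polynomial.eval_prod]
    simp [smul_eq_mul]
  have hq0'x : (Polynomial.derivative (q0 n c)).eval x
      = ∑ j, ∏ i ∈ Finset.univ.erase j, (x - c i) := by
    unfold q0
    rw [deriv_linprod]
    simp [Polynomial.eval_finset_sum, Polynomial.eval_prod]
  have hRHS : (((n:ℂ)+r0-1)/t - ∑ j, (1 - r j)/(x - c j)) * (t * ∏ j, (x - c j))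
      = ((n:ℂ)+r0-1) * (q0 n c).eval x - t * (Polynomial.derivative (q0 n c)).eval x
        + t * (q1 n c r).eval x := by
    rw [sub_mul, Finset.sum_mul]
    have h1 : ((n:ℂ)+r0-1)/t * (t * ∏ j, (x - c j)) = ((n:ℂ)+r0-1) * ∏ j, (x - c j) := by
      field_simp
    have h2 : ∀ j : Fin n, (1 - r j)/(x - c j) * (t * ∏ j, (x - c j))
        = t * ((1 - r j) * ∏ i ∈ Finset.univ.erase j, (x - c i)) := by
      intro j
      rw [← Finset.mul_prod_erase Finset.univ _ (Finset.mem_univ j)]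
      field_simp [hxc j]
    rw [h1, Finset.sum_congr rfl (fun j _ => h2 j), ← Finset.mul_sum, hq0x, hq1x, hq0'x]
    have hsplit : ∑ j, (1 - r j) * (∏ i ∈ Finset.univ.erase j, (x - c i))
        = (∑ j, ∏ i ∈ Finset.univ.erase j, (x - c i))
          - ∑ j, r j * ∏ i ∈ Finset.univ.erase j, (x - c i) := by
      rw [← Finset.sum_sub_distrib]
      exact Finset.sum_congr rfl fun j _ => by ring
    rw [hsplit]
    ring
  conv_rhs => rw [mul_assoc, hRHS]
  ring
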